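/- arXiv:2507.11228 — 2 statements merged into one kernel-verified Lean document; each statement's English description precedes it below -/
import Mathlib

section
/- Fix w* > 0 and γ ∈ (1, 2), and define the gradient descent map T(w) = w - (γ/σ'(w*))·(σ(w) - σ(w*)) where σ is the sigmoid. Then for every w ≥ w*, one has |T(w) - w*| < |w - w*| (one-step contraction on the right of w*), with the convention that the inequality is interpreted as T(w*) = w* when w = w*, i.e. for all w > w*, |T(w) - w*| < w - w*. -/
noncomputable def sigmoid (w : ℝ) : ℝ := 1 / (1 + Real.exp (-w))

/-!
By the mean value theorem, `T w - w* = (1 - γ σ'(c) / σ'(w*)) (w - w*)` for some `c ∈ (w*, w)`.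
Since `σ' = σ (1 - σ)` and `σ ≥ 1/2` on `[0, ∞)`, `σ'` is decreasing there, so
`0 < σ'(c) ≤ σ'(w*)` and the factor lies in `[1 - γ, 1)`, which `γ < 2` puts inside `(-1, 1)`.
-/

open Set

theorem sigmoid_eq_real_sigmoid : sigmoid = Real.sigmoid :=
  funext fun _ => one_div _

namespace Real

theorem deriv_sigmoid_pos (x : ℝ) : 0 < deriv Real.sigmoid x := by
  rw [deriv_sigmoid]
  exact mul_pos (sigmoid_pos x) (sub_pos.2 (sigmoid_lt_one x))

theorem antitoneOn_deriv_sigmoid : AntitoneOn (deriv Real.sigmoid) (Ici 0) := by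
  intro a ha b _ hab
  have hhalf : 2⁻¹ ≤ Real.sigmoid a := sigmoid_zero ▸ sigmoid_le ha
  have hab' : Real.sigmoid a ≤ Real.sigmoid b := sigmoid_le hab
  simp only [deriv_sigmoid]
  nlinarith

end Real

theorem abs_one_sub_div_mul_lt_one {γ k L : ℝ} (hγ0 : 0 < γ) (hγ2 : γ < 2) (hk : 0 < k)
    (hkL : k ≤ L) : |1 - γ / L * k| < 1 := by
  have hL : 0 < L := hk.trans_le hkL
  have hpos : 0 < γ / L * k := by positivity
  have hle : γ / L * k ≤ γ := by
    rw [div_mul_eq_mul_div, div_le_iff₀ hL]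
    nlinarith
  rw [abs_sub_lt_iff]
  constructor <;> linarith

theorem abs_sub_div_mul_sub_sub_lt_of_deriv_mem_Ioc {f : ℝ → ℝ} {a w γ L : ℝ} (hw : a < w)
    (hfc : ContinuousOn f (Icc a w)) (hfd : DifferentiableOn ℝ f (Ioo a w))
    (hderiv : ∀ x ∈ Ioo a w, deriv f x ∈ Ioc 0 L) (hγ0 : 0 < γ) (hγ2 : γ < 2) :
    |w - γ / L * (f w - f a) - a| < w - a := by
  have hwa : 0 < w - a := sub_pos.2 hw
  obtain ⟨c, hc, hslope⟩ := exists_deriv_eq_slope f hw hfc hfd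
  have hmvt : f w - f a = deriv f c * (w - a) := by
    rw [hslope]
    field_simp
  obtain ⟨hk, hkL⟩ := hderiv c hc
  calc |w - γ / L * (f w - f a) - a| = |(1 - γ / L * deriv f c) * (w - a)| := by
        rw [hmvt]
        ring_nf
    _ = |1 - γ / L * deriv f c| * (w - a) := by rw [abs_mul, abs_of_pos hwa]
    _ < w - a := mul_lt_of_lt_one_left hwa (abs_one_sub_div_mul_lt_one hγ0 hγ2 hk hkL)

theorem one_step_contraction_from_right
    (wstar γ : ℝ) (hwstar : 0 < wstar) (hγ1 : 1 < γ) (hγ2 : γ < 2)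
    (T : ℝ → ℝ)
    (hT : ∀ w, T w = w - (γ / deriv sigmoid wstar) * (sigmoid w - sigmoid wstar)) :
    T wstar = wstar ∧ ∀ w, wstar < w → |T w - wstar| < w - wstar := by
  rw [sigmoid_eq_real_sigmoid] at hT
  refine ⟨by simp [hT], fun w hw => ?_⟩
  rw [hT]
  refine abs_sub_div_mul_sub_sub_lt_of_deriv_mem_Ioc hw continuous_sigmoid.continuousOn
    differentiable_sigmoid.differentiableOn (fun x hx => ⟨Real.deriv_sigmoid_pos x, ?_⟩)
    (by linarith) hγ2
  exact Real.antitoneOn_deriv_sigmoid hwstar.le (hwstar.trans hx.1).le hx.1.le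
end

section
/- Fix w* > 0, γ ∈ (1,2), and T(w) = w - (γ/σ'(w*))·(σ(w) - σ(w*)). If w_t > w* and T(w_t) < w*, then R(T(w_t)) > R(w_t), where R(w) = (σ(w) - σ(w*))/(w - w*). -/
/-!
On `[0, ∞)` the sigmoid is strictly concave, so secant slopes from `w*` decrease as the other
endpoint moves right; since `T wt < w* < wt` this settles the case `T wt ≥ 0`. The slope `s` of
the secant over `[w*, wt]` lies in `(0, σ'(w*))`, so `T wt - w* = (1 - γ s / σ'(w*)) (wt - w*)`
with `γ s / σ'(w*) < 2`: the step overshoots `w*` by less than `wt - w*`, hence `T wt > -wt`.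
If `T wt = -c < 0`, the point symmetry `σ(-c) = 2 σ(0) - σ(c)` makes the secant slope over
`[-c, w*]` the mediant of the slopes over `[0, w*]` and `[0, c]`, both of which exceed the slope
over `[w*, wt]` because `w*, c < wt`.
-/

open Set

theorem StrictConcaveOn.slope_lt_slope_of_neg_lt {f : ℝ → ℝ}
    (hf : StrictConcaveOn ℝ (Ici 0) f) (hsymm : ∀ x, f (-x) = 2 * f 0 - f x)
    {a b x : ℝ} (ha : 0 < a) (hab : a < b) (hbx : -b < x) (hxa : x < a) :
    slope f a b < slope f a x := by
  rcases le_or_gt 0 x with hx | hx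
  · simpa only [slope_def_field] using
      hf.secant_strict_mono ha.le hx (ha.trans hab).le hxa.ne hab.ne' (hxa.trans hab)
  have hb : (0 : ℝ) < b := ha.trans hab
  have hslope_lt : slope f a b < slope f 0 b := by
    have key := hf.secant_strict_mono hb.le self_mem_Ici ha.le hb.ne hab.ne ha
    rwa [← slope_def_field, ← slope_def_field, slope_comm f b, slope_comm f b] at key
  have hmul_lt {y : ℝ} (hy : 0 < y) (hyb : y ≤ b) : slope f a b * y < f y - f 0 := by
    have hslope_le : slope f 0 b ≤ slope f 0 y := by
      rcases hyb.lt_or_eq with hyb | rfl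
      · simpa only [slope_def_field] using
          (hf.secant_strict_mono self_mem_Ici hy.le hb.le hy.ne' hb.ne' hyb).le
      · exact le_rfl
    have hslope_zero : slope f 0 y = (f y - f 0) / y := by rw [slope_def_field, sub_zero]
    rw [← lt_div_iff₀ hy, ← hslope_zero]
    exact hslope_lt.trans_le hslope_le
  have hfx : f x = 2 * f 0 - f (-x) := by simpa using hsymm (-x)
  rw [slope_def_field f a x, lt_div_iff_of_neg (by linarith), hfx]
  linarith [hmul_lt ha hab.le, hmul_lt (neg_pos.mpr hx) (by linarith)]

theorem Real.strictConcaveOn_sigmoid_Ici : StrictConcaveOn ℝ (Ici 0) Real.sigmoid := by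
  refine StrictAntiOn.strictConcaveOn_of_deriv (convex_Ici 0)
    continuous_sigmoid.continuousOn ?_
  rw [interior_Ici, Real.deriv_sigmoid]
  intro x hx y _ hxy
  have hhalf : 1 / 2 < Real.sigmoid x := by
    simpa [Real.sigmoid_zero] using Real.sigmoid_strictMono (mem_Ioi.mp hx)
  have hmono := Real.sigmoid_strictMono hxy
  have hfactor : 0 < (Real.sigmoid y - Real.sigmoid x) * (Real.sigmoid x + Real.sigmoid y - 1) :=
    mul_pos (sub_pos.mpr hmono) (by linarith)
  dsimp only
  linarith

theorem two_mul_sub_lt_sub_div_mul_sub_of_slope_lt {f : ℝ → ℝ} {a b d γ : ℝ} (hab : a < b)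
    (hpos : 0 < slope f a b) (hlt : slope f a b < d) (hγ : γ < 2) :
    2 * a - b < b - γ / d * (f b - f a) := by
  have hd : 0 < d := hpos.trans hlt
  have hratio : γ / d * slope f a b < 2 := by
    rw [div_mul_eq_mul_div, div_lt_iff₀ hd]
    calc γ * slope f a b < 2 * slope f a b := mul_lt_mul_of_pos_right hγ hpos
      _ < 2 * d := by linarith
  have hdiff : f b - f a = (b - a) * slope f a b := by
    rw [← smul_eq_mul, sub_smul_slope, vsub_eq_sub]
  rw [hdiff]
  linarith [mul_lt_mul_of_pos_right hratio (sub_pos.mpr hab)]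

theorem secant_slope_increases_after_crossing_general
    (wstar γ : ℝ) (hwstar : 0 < wstar) (hγ2 : γ < 2)
    (T : ℝ → ℝ)
    (hT : ∀ w, T w = w - (γ / deriv sigmoid wstar) * (sigmoid w - sigmoid wstar))
    (R : ℝ → ℝ)
    (hR : ∀ w, w ≠ wstar → R w = (sigmoid w - sigmoid wstar) / (w - wstar))
    (wt : ℝ) (hwt : wstar < wt) (hcross : T wt < wstar) :
    R wt < R (T wt) := by
  rw [sigmoid_eq_real_sigmoid] at hT hR
  have hR_slope {w : ℝ} (hw : w ≠ wstar) : R w = slope Real.sigmoid wstar w := by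
    rw [hR w hw, slope_def_field]
  have hs_pos : 0 < slope Real.sigmoid wstar wt :=
    (slope_pos_iff_of_le hwt.le).mpr (Real.sigmoid_strictMono hwt)
  have hs_lt_deriv : slope Real.sigmoid wstar wt < deriv Real.sigmoid wstar :=
    Real.strictConcaveOn_sigmoid_Ici.slope_lt_deriv hwstar.le (hwstar.trans hwt).le hwt
      differentiableAt_sigmoid
  have hT_gt : -wt < T wt := by
    have hstep := two_mul_sub_lt_sub_div_mul_sub_of_slope_lt hwt hs_pos hs_lt_deriv hγ2
    rw [hT]
    linarith
  rw [hR_slope hwt.ne', hR_slope hcross.ne]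
  exact Real.strictConcaveOn_sigmoid_Ici.slope_lt_slope_of_neg_lt
    (fun x ↦ by rw [Real.sigmoid_neg, Real.sigmoid_zero]; ring) hwstar hwt hT_gt hcross

theorem secant_slope_increases_after_crossing
    (wstar γ : ℝ) (hwstar : 0 < wstar) (hγ1 : 1 < γ) (hγ2 : γ < 2)
    (T : ℝ → ℝ)
    (hT : ∀ w, T w = w - (γ / deriv sigmoid wstar) * (sigmoid w - sigmoid wstar))
    (R : ℝ → ℝ)
    (hR : ∀ w, w ≠ wstar → R w = (sigmoid w - sigmoid wstar) / (w - wstar))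
    (wt : ℝ) (hwt : wstar < wt) (hcross : T wt < wstar) :
    R wt < R (T wt) :=
  secant_slope_increases_after_crossing_general wstar γ hwstar hγ2 T hT R hR wt hwt hcross
end
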